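/- Let (x_t, y_t, (Q_t, H_t))_{t ∈ 𝕋_n} be a cluster pattern of a 2-cycle-allowed cluster algebra with coefficients in an arbitrary semifield ℙ, with initial seed at t₀ having cluster (x₁,…,x_n) and coefficients (y₁,…,y_n). Let X_{i,t} be the cluster variables of the pattern with the same initial quiver with homotopy and principal coefficients at t₀, and F_{i,t} the polynomials obtained from X_{i,t} by specializing x₁,…,x_n to 1. Then every cluster variable satisfies the separation formula x_{i,t} = X_{i,t}|_ℱ(x₁,…,x_n; y₁,…,y_n) / F_{i,t}|_ℙ(y₁,…,y_n), where the numerator is evaluated in the ambient field ℱ and the denominator in the semifield ℙ. -/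

import Mathlib

namespace CMu

/-- A (locally small) quiver with vertex type `V`: a type of arrows together with
source and target maps.  All quivers in a given statement share the vertex type. -/
structure Quiv (V : Type) where
  Arrow : Type
  src : Arrow → V
  tgt : Arrow → V

variable {V : Type}

namespace Quiv

/-- A quiver is loop-free if no arrow has equal source and target. -/
def LoopFree (Q : Quiv V) : Prop := ∀ a : Q.Arrow, Q.src a ≠ Q.tgt a

/-- A quiver is `2`-acyclic if it contains no oriented `2`-cycle, i.e. there is no pair of
arrows `a, b` with `t a = s b` and `t b = s a` (a loop forms a `2`-cycle with itself). -/
def TwoAcyclic (Q : Quiv V) : Prop :=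
  ∀ a b : Q.Arrow, Q.tgt a = Q.src b → Q.tgt b = Q.src a → False

/-- A quiver is locally finite if each vertex is the source (resp. target) of only
finitely many arrows. -/
def LocallyFinite (Q : Quiv V) : Prop :=
  ∀ v : V, {a : Q.Arrow | Q.src a = v}.Finite ∧ {a : Q.Arrow | Q.tgt a = v}.Finite

/-- The number of arrows from `i` to `j`. -/
noncomputable def nArrows (Q : Quiv V) (i j : V) : ℕ :=
  Nat.card {a : Q.Arrow // Q.src a = i ∧ Q.tgt a = j}

end Quiv

/-- A step of a walk in the underlying graph of a quiver: an arrow traversed forwards,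
or an arrow traversed backwards (its formal inverse). -/
inductive Step (Q : Quiv V) : V → V → Type where
  | fwd (a : Q.Arrow) : Step Q (Q.src a) (Q.tgt a)
  | bwd (a : Q.Arrow) : Step Q (Q.tgt a) (Q.src a)

/-- The inverse of a step. -/
def Step.inv {Q : Quiv V} : {x y : V} → Step Q x y → Step Q y x
  | _, _, .fwd a => .bwd a
  | _, _, .bwd a => .fwd a

/-- A step is forward if it traverses an arrow in its own direction. -/
def Step.IsFwd {Q : Quiv V} : {x y : V} → Step Q x y → Prop
  | _, _, .fwd _ => True
  | _, _, .bwd _ => False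

/-- A walk in (the underlying graph of) a quiver `Q` from `x` to `y`:
a word in the arrows of `Q` and their formal inverses. -/
inductive Walk (Q : Quiv V) : V → V → Type where
  | nil (v : V) : Walk Q v v
  | cons {x y z : V} (e : Step Q x y) (w : Walk Q y z) : Walk Q x z

namespace Walk

/-- Composition (concatenation) of walks. -/
def comp {Q : Quiv V} : {x y z : V} → Walk Q x y → Walk Q y z → Walk Q x z
  | _, _, _, .nil _, w => w
  | _, _, _, .cons e u, w => .cons e (comp u w)

/-- The walk consisting of a single step. -/
def single {Q : Quiv V} {x y : V} (e : Step Q x y) : Walk Q x y := .cons e (.nil _)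

/-- The inverse (reversal) of a walk. -/
def inv {Q : Quiv V} : {x y : V} → Walk Q x y → Walk Q y x
  | _, _, .nil v => .nil v
  | _, _, .cons e u => (inv u).comp (single e.inv)

/-- Transport a walk along equalities of its endpoints. -/
def cast {Q : Quiv V} {x y x' y' : V} (hx : x = x') (hy : y = y') (w : Walk Q x y) :
    Walk Q x' y' := by subst hx; subst hy; exact w

/-- A walk is a (directed) path if all of its steps are forward. -/
def AllFwd {Q : Quiv V} : {x y : V} → Walk Q x y → Prop
  | _, _, .nil _ => True
  | _, _, .cons e w => e.IsFwd ∧ AllFwd w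

end Walk

/-- A quiver is acyclic if it contains no (nontrivial) oriented cycle. -/
def Quiv.Acyclic (Q : Quiv V) : Prop :=
  ∀ (v : V) (w : Walk Q v v), w.AllFwd → w = .nil v

/-- A quiver is connected if any two vertices are joined by a walk. -/
def Quiv.Connected (Q : Quiv V) : Prop := ∀ x y : V, Nonempty (Walk Q x y)

/-- Free homotopy of walks: the equivalence relation on walks generated by cancelling
`e ⬝ e⁻¹`.  Two walks are homotopic iff they have the same reduction, so that the morphisms
of the free groupoid `π(Q)` from `x` to `y` are the homotopy classes of walks from `x` to `y`. -/
inductive WalkHtpy (Q : Quiv V) : {x y : V} → Walk Q x y → Walk Q x y → Prop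
  | refl {x y : V} (w : Walk Q x y) : WalkHtpy Q w w
  | symm {x y : V} {w u : Walk Q x y} : WalkHtpy Q w u → WalkHtpy Q u w
  | trans {x y : V} {w u t : Walk Q x y} : WalkHtpy Q w u → WalkHtpy Q u t → WalkHtpy Q w t
  | cancel {x y z : V} (e : Step Q x y) (w : Walk Q x z) :
      WalkHtpy Q (.cons e (.cons e.inv w)) w
  | congr {x y z : V} (e : Step Q x y) {w u : Walk Q y z} :
      WalkHtpy Q w u → WalkHtpy Q (.cons e w) (.cons e u)

/-- A family of sets of cyclic walks, one at each vertex.  Such a family, when it satisfies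
`IsHomotopy`, encodes a normal subgroupoid (a *homotopy*) `H` of the free groupoid `π(Q)`:
`H(v,v)` is the set of homotopy classes of the walks in the family at `v`. -/
def HSet (Q : Quiv V) := ∀ v : V, Set (Walk Q v v)

/-- `H` is a homotopy on `Q` (a normal subgroupoid of the free groupoid `π(Q)`):
each `H v` is closed under free homotopy of walks, contains the identity, is closed under
composition and inverse (so it determines a subgroup of `π₁(Q,v) = π(Q)(v,v)`), and the family
is closed under conjugation by arbitrary walks. -/
structure IsHomotopy (Q : Quiv V) (H : HSet Q) : Prop where
  htpy_mem : ∀ {v : V} {w u : Walk Q v v}, WalkHtpy Q w u → w ∈ H v → u ∈ H v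
  nil_mem : ∀ v : V, Walk.nil v ∈ H v
  comp_mem : ∀ {v : V} {w u : Walk Q v v}, w ∈ H v → u ∈ H v → w.comp u ∈ H v
  inv_mem : ∀ {v : V} {w : Walk Q v v}, w ∈ H v → w.inv ∈ H v
  conj_mem : ∀ {x y : V} (g : Walk Q x y) {w : Walk Q x x},
    w ∈ H x → (g.inv.comp (w.comp g)) ∈ H y

/-- The oriented `2`-cycle determined by arrows `a : i → j` and `b : j → i`, as a cyclic
walk based at `i = s a`. -/
def twoCycle {Q : Quiv V} (a b : Q.Arrow) (h : Q.tgt a = Q.src b) (h' : Q.tgt b = Q.src a) :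
    Walk Q (Q.src a) (Q.src a) :=
  Walk.cons (.fwd a) ((Walk.single (.fwd b)).cast h.symm h')

/-- A homotopy is reduced if it contains no oriented `2`-cycle of `Q`. -/
def IsReducedH (Q : Quiv V) (H : HSet Q) : Prop :=
  ∀ (a b : Q.Arrow) (h : Q.tgt a = Q.src b) (h' : Q.tgt b = Q.src a),
    twoCycle a b h h' ∉ H (Q.src a)

/-- Two walks `w, u : x → y` represent the same morphism of the quotient groupoid
`π(Q)/H` iff `w⁻¹ u ∈ H`. -/
def HEquiv {Q : Quiv V} (H : HSet Q) {x y : V} (w u : Walk Q x y) : Prop :=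
  w.inv.comp u ∈ H y

/-- The trivial homotopy `𝟙`: only the identity morphisms, i.e. only walks homotopic
to the constant walk. -/
def trivH (Q : Quiv V) : HSet Q := fun v => {w | WalkHtpy Q w (.nil v)}

/-- The maximal homotopy `π(Q)`: all cyclic walks. -/
def maxH (Q : Quiv V) : HSet Q := fun _ => Set.univ

/-- The normal subgroupoid (homotopy) generated by a family `S` of cyclic walks. -/
def genH (Q : Quiv V) (S : HSet Q) : HSet Q := fun v =>
  {w | ∀ K : HSet Q, IsHomotopy Q K → (∀ x, S x ⊆ K x) → w ∈ K v}

/-- The squares of all cyclic walks; `genH Q (sqGens Q)` is the normal subgroupoid `π(Q)²`. -/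
def sqGens (Q : Quiv V) : HSet Q := fun v => {w | ∃ u : Walk Q v v, w = u.comp u}

/-- A morphism from the free groupoid on `Q` to the free groupoid on `R` (both over the same
vertex type, fixing all vertices), given by a choice of a walk in `R` for every arrow of `Q`. -/
structure QMap (Q R : Quiv V) where
  toWalk : (a : Q.Arrow) → Walk R (Q.src a) (Q.tgt a)

namespace QMap

/-- The image of a step. -/
def mapStep {Q R : Quiv V} (F : QMap Q R) : {x y : V} → Step Q x y → Walk R x y
  | _, _, .fwd a => F.toWalk a
  | _, _, .bwd a => (F.toWalk a).inv

/-- The induced map on walks. -/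
def mapWalk {Q R : Quiv V} (F : QMap Q R) : {x y : V} → Walk Q x y → Walk R x y
  | _, _, .nil v => .nil v
  | _, _, .cons e w => (F.mapStep e).comp (F.mapWalk w)

/-- Composition of `QMap`s. -/
def comp {Q R S : Quiv V} (F : QMap Q R) (G : QMap R S) : QMap Q S :=
  ⟨fun a => G.mapWalk (F.toWalk a)⟩

end QMap

/-- The kernel, relative to a homotopy `H` on `R`, of the functor `π(Q) → π(R)/H`
induced by a `QMap`: all cyclic walks whose image lies in `H`. -/
def kerH {Q R : Quiv V} (F : QMap Q R) (H : HSet R) : HSet Q :=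
  fun v => {w | F.mapWalk w ∈ H v}

/-- A (vertex-fixing) isomorphism of quivers over the same vertex type. -/
structure QIso (Q R : Quiv V) where
  arr : Q.Arrow ≃ R.Arrow
  src_eq : ∀ a, R.src (arr a) = Q.src a
  tgt_eq : ∀ a, R.tgt (arr a) = Q.tgt a

/-- The `QMap` underlying a quiver isomorphism. -/
def QIso.toQMap {Q R : Quiv V} (f : QIso Q R) : QMap Q R :=
  ⟨fun a => (Walk.single (.fwd (f.arr a))).cast (f.src_eq a) (f.tgt_eq a)⟩

/-- The pre-mutation `μ̃_k(Q)` of a loop-free quiver `Q` at the vertex `k`: arrows of `Q` not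
incident to `k` are kept, arrows incident to `k` are replaced by reversed arrows `γ*`, and
for every pair of arrows `α, β` with `s α = t β = k` and `s β ≠ t α` a new composite arrow
`[αβ] : s β → t α` is added. -/
def preMut (Q : Quiv V) (k : V) : Quiv V where
  Arrow := {a : Q.Arrow // Q.src a ≠ k ∧ Q.tgt a ≠ k} ⊕
    ({a : Q.Arrow // Q.src a = k ∨ Q.tgt a = k} ⊕
     {p : Q.Arrow × Q.Arrow // Q.src p.1 = k ∧ Q.tgt p.2 = k ∧ Q.src p.2 ≠ Q.tgt p.1})
  src x := match x with
    | .inl a => Q.src a.1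
    | .inr (.inl a) => Q.tgt a.1
    | .inr (.inr p) => Q.src p.1.2
  tgt x := match x with
    | .inl a => Q.tgt a.1
    | .inr (.inl a) => Q.src a.1
    | .inr (.inr p) => Q.tgt p.1.1

/-- The canonical functor `φ : π(μ̃_k Q) → π(Q)` (to be composed with `π(Q) → π(Q)/H`):
it fixes all vertices, sends a kept arrow `γ` to `γ`, a reversed arrow `γ*` to `γ⁻¹`, and a
composite arrow `[αβ]` to the walk `αβ`. -/
def phiQMap (Q : Quiv V) (k : V) : QMap (preMut Q k) Q where
  toWalk x := match x with
    | .inl a => Walk.single (.fwd a.1)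
    | .inr (.inl a) => Walk.single (.bwd a.1)
    | .inr (.inr p) => Walk.cons (.fwd p.1.2)
        ((Walk.single (.fwd p.1.1)).cast (p.2.1.trans p.2.2.1.symm) rfl)

/-- The homotopy `H' = ker (φ : π(μ̃_k Q) → π(Q)/H)` of the pre-mutation `μ̃_k(Q,H) = (Q',H')`. -/
def preH (Q : Quiv V) (H : HSet Q) (k : V) : HSet (preMut Q k) := kerH (phiQMap Q k) H

/-- The subquiver of `R` obtained by deleting the arrows in `S`. -/
def restrictQ (R : Quiv V) (S : Set R.Arrow) : Quiv V where
  Arrow := {a : R.Arrow // a ∉ S}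
  src a := R.src a.1
  tgt a := R.tgt a.1

/-- The inclusion `QMap` of a subquiver. -/
def inclQMap (R : Quiv V) (S : Set R.Arrow) : QMap (restrictQ R S) R :=
  ⟨fun a => Walk.single (.fwd a.1)⟩

/-- A deletion of `2`-cycles lying in a homotopy `H` on a quiver `R`, away from the
vertex `k`: a collection of pairwise disjoint pairs of opposite arrows `(γ, δ)` between two
distinct vertices `i ≠ j`, both different from `k`, such that each composite `2`-cycle `γδ`
lies in `H`. -/
structure TwoCycleDeletion (R : Quiv V) (H : HSet R) (k : V) where
  pairs : Set (R.Arrow × R.Arrow)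
  endpoints : ∀ q ∈ pairs, R.tgt q.1 = R.src q.2 ∧ R.tgt q.2 = R.src q.1
  src_ne_k : ∀ q ∈ pairs, R.src q.1 ≠ k
  tgt_ne_k : ∀ q ∈ pairs, R.tgt q.1 ≠ k
  src_ne_tgt : ∀ q ∈ pairs, R.src q.1 ≠ R.tgt q.1
  mem_H : ∀ q ∈ pairs, ∀ (h : R.tgt q.1 = R.src q.2) (h' : R.tgt q.2 = R.src q.1),
    twoCycle q.1 q.2 h h' ∈ H (R.src q.1)
  disjoint : ∀ q ∈ pairs, ∀ q' ∈ pairs, q ≠ q' →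
    q.1 ≠ q'.1 ∧ q.1 ≠ q'.2 ∧ q.2 ≠ q'.1 ∧ q.2 ≠ q'.2

namespace TwoCycleDeletion

variable {R : Quiv V} {H : HSet R} {k : V}

/-- The set of deleted arrows. -/
def deleted (D : TwoCycleDeletion R H k) : Set R.Arrow :=
  {a | ∃ q ∈ D.pairs, a = q.1 ∨ a = q.2}

/-- A deletion is maximal if no `2`-cycle lying in `H` (between two distinct vertices, both
different from `k`) survives it.  This is the result of the iterative deletion procedure. -/
def Maximal (D : TwoCycleDeletion R H k) : Prop :=
  ∀ γ δ : R.Arrow, γ ∉ D.deleted → δ ∉ D.deleted →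
    R.src γ ≠ k → R.tgt γ ≠ k → R.src γ ≠ R.tgt γ →
    ∀ (h : R.tgt γ = R.src δ) (h' : R.tgt δ = R.src γ),
      twoCycle γ δ h h' ∉ H (R.src γ)

end TwoCycleDeletion

/-- The quiver `Q†` of the mutation `μ_k(Q,H) = (Q†,H†)` determined by a choice `D` of
deleted `2`-cycles. -/
def mutQuiv (Q : Quiv V) (H : HSet Q) (k : V)
    (D : TwoCycleDeletion (preMut Q k) (preH Q H k) k) : Quiv V :=
  restrictQ (preMut Q k) D.deleted

/-- The homotopy `H† = ker (ψ : π(Q†) → π(Q')/H')` of the mutation `μ_k(Q,H) = (Q†,H†)`,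
where `ψ` is induced by the inclusion `Q† ⊆ Q'`. -/
def mutH (Q : Quiv V) (H : HSet Q) (k : V)
    (D : TwoCycleDeletion (preMut Q k) (preH Q H k) k) : HSet (mutQuiv Q H k D) :=
  kerH (inclQMap (preMut Q k) D.deleted) (preH Q H k)

/-- `(R, K)` is (isomorphic, by a vertex-fixing isomorphism matching the homotopies, to)
the mutation `μ_k(Q, H)` of the quiver with homotopy `(Q, H)` in direction `k`. -/
def IsMutationStep (Q : Quiv V) (H : HSet Q) (k : V) (R : Quiv V) (K : HSet R) : Prop :=
  ∃ D : TwoCycleDeletion (preMut Q k) (preH Q H k) k, D.Maximal ∧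
    ∃ f : QIso (mutQuiv Q H k D) R,
      ∀ (v : V) (w : Walk (mutQuiv Q H k D) v v),
        w ∈ mutH Q H k D v ↔ f.toQMap.mapWalk w ∈ K v

/-- A `QMap` `F : π(Q) → π(R)` induces an isomorphism of quotient groupoids
`π(Q)/H_Q ≅ π(R)/H_R` (it is the identity on objects, well defined, full and faithful
on all morphism sets). -/
structure InducesQuotIso {Q R : Quiv V} (F : QMap Q R) (HQ : HSet Q) (HR : HSet R) : Prop where
  maps : ∀ {x y : V} (w u : Walk Q x y), HEquiv HQ w u → HEquiv HR (F.mapWalk w) (F.mapWalk u)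
  full : ∀ {x y : V} (w : Walk R x y), ∃ u : Walk Q x y, HEquiv HR (F.mapWalk u) w
  faithful : ∀ {x y : V} (w u : Walk Q x y),
    HEquiv HR (F.mapWalk w) (F.mapWalk u) → HEquiv HQ w u

/-- A deletion datum for the Fomin–Zelevinsky mutation: a collection of pairwise disjoint
pairs of opposite arrows (oriented `2`-cycles). -/
structure FZDeletion (R : Quiv V) where
  pairs : Set (R.Arrow × R.Arrow)
  endpoints : ∀ q ∈ pairs, R.tgt q.1 = R.src q.2 ∧ R.tgt q.2 = R.src q.1
  disjoint : ∀ q ∈ pairs, ∀ q' ∈ pairs, q ≠ q' →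
    q.1 ≠ q'.1 ∧ q.1 ≠ q'.2 ∧ q.2 ≠ q'.1 ∧ q.2 ≠ q'.2

/-- The arrows deleted by an `FZDeletion`. -/
def FZDeletion.deleted {R : Quiv V} (D : FZDeletion R) : Set R.Arrow :=
  {a | ∃ q ∈ D.pairs, a = q.1 ∨ a = q.2}

/-- `R` is (a representative of) the Fomin–Zelevinsky mutation `μ^FZ_k(Q)` of the `2`-acyclic
quiver `Q`: it is obtained from the pre-mutation of `Q` at `k` by deleting a maximal collection
of oriented `2`-cycles (so that the result is `2`-acyclic), up to vertex-fixing isomorphism. -/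
def IsFZMut (Q : Quiv V) (k : V) (R : Quiv V) : Prop :=
  ∃ D : FZDeletion (preMut Q k),
    (restrictQ (preMut Q k) D.deleted).TwoAcyclic ∧
    Nonempty (QIso (restrictQ (preMut Q k) D.deleted) R)

/-- Two homotopies `H, H'` on `Q` are equivalent if, for every mutation sequence, the
underlying quivers of the corresponding mutated quivers with homotopies are isomorphic by
vertex-fixing isomorphisms. -/
def HomotopyEquivalent (Q : Quiv V) (H H' : HSet Q) : Prop :=
  ∀ (ℓ : ℕ) (ks : ℕ → V)
    (Qs : ℕ → Quiv V) (Hs : ∀ i, HSet (Qs i))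
    (Qs' : ℕ → Quiv V) (Hs' : ∀ i, HSet (Qs' i)),
    Qs 0 = Q → HEq (Hs 0) H → Qs' 0 = Q → HEq (Hs' 0) H' →
    (∀ i < ℓ, IsMutationStep (Qs i) (Hs i) (ks i) (Qs (i + 1)) (Hs (i + 1))) →
    (∀ i < ℓ, IsMutationStep (Qs' i) (Hs' i) (ks i) (Qs' (i + 1)) (Hs' (i + 1))) →
    Nonempty (QIso (Qs ℓ) (Qs' ℓ))

/-- The relation on vertices generated by the arrows (connectivity). -/
def adjRel (Q : Quiv V) : V → V → Prop := fun x y =>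
  ∃ a : Q.Arrow, (Q.src a = x ∧ Q.tgt a = y) ∨ (Q.src a = y ∧ Q.tgt a = x)

/-- The number of connected components of the underlying graph. -/
noncomputable def componentCount (Q : Quiv V) : ℕ := Nat.card (Quot (adjRel Q))

/-- The rank of the fundamental group of (the underlying graph of) a finite quiver:
`|Q₁| - |Q₀| + (number of connected components)`. -/
noncomputable def fundGroupRank (Q : Quiv V) : ℤ :=
  (Nat.card Q.Arrow : ℤ) - (Nat.card V : ℤ) + (componentCount Q : ℤ)

end CMu

namespace CMu

/-- The auxiliary addition of a semifield in the sense of Fomin–Zelevinsky: `(ℙ, ·)` is an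
abelian group, and `⊕` is a commutative associative binary operation over which
multiplication distributes. -/
class SemifieldAdd (P : Type) [CommGroup P] where
  sadd : P → P → P
  sadd_comm : ∀ a b, sadd a b = sadd b a
  sadd_assoc : ∀ a b c, sadd (sadd a b) c = sadd a (sadd b c)
  mul_sadd : ∀ a b c, a * sadd b c = sadd (a * b) (a * c)

/-- The ambient field `ℱ = ℚℙ(x₁, …, x_n)`: the field of rational functions in `n`
variables over the fraction field `ℚℙ` of the group ring `ℤℙ`. -/
abbrev ClusterField (P : Type) [CommGroup P] [IsDomain (MonoidAlgebra ℤ P)] (n : ℕ) :=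
  FractionRing (MvPolynomial (Fin n) (FractionRing (MonoidAlgebra ℤ P)))

/-- The canonical embedding `ℙ → ℱ`. -/
noncomputable def iotaP (P : Type) [CommGroup P] [IsDomain (MonoidAlgebra ℤ P)] (n : ℕ)
    (y : P) : ClusterField P n :=
  algebraMap (MvPolynomial (Fin n) (FractionRing (MonoidAlgebra ℤ P))) _
    (MvPolynomial.C (algebraMap (MonoidAlgebra ℤ P) (FractionRing (MonoidAlgebra ℤ P))
      (MonoidAlgebra.of ℤ P y)))

/-- The initial cluster: the free generating set `x₁, …, x_n` of `ℱ` over `ℚℙ`. -/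
noncomputable def xInit (P : Type) [CommGroup P] [IsDomain (MonoidAlgebra ℤ P)] (n : ℕ)
    (i : Fin n) : ClusterField P n :=
  algebraMap (MvPolynomial (Fin n) (FractionRing (MonoidAlgebra ℤ P))) _ (MvPolynomial.X i)

/-- The coefficient mutation (`Y`-mutation) formula in direction `k`:
`y'_k = y_k⁻¹` and `y'_j = y_j y_k^{p_{kj}} (y_k ⊕ 1)^{p_{jk} − p_{kj}}` for `j ≠ k`. -/
noncomputable def yMut {P : Type} [CommGroup P] [SemifieldAdd P] {n : ℕ}
    (Q : Quiv (Fin n)) (k : Fin n) (y : Fin n → P) : Fin n → P := fun j =>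
  if j = k then (y k)⁻¹
  else y j * y k ^ Q.nArrows k j *
    SemifieldAdd.sadd (y k) 1 ^ ((Q.nArrows j k : ℤ) - (Q.nArrows k j : ℤ))

/-- The cluster exchange relation in direction `k`, in an ambient field `F` receiving the
coefficient semifield via `ι`: the mutated cluster `x'` agrees with `x` away from `k` and
`x'_k = (y_k ∏_j x_j^{p_{jk}} + ∏_j x_j^{p_{kj}}) / ((y_k ⊕ 1) x_k)`. -/
noncomputable def XMutEq {P : Type} [CommGroup P] [SemifieldAdd P] {n : ℕ} {F : Type}
    [Field F] (ι : P → F) (Q : Quiv (Fin n)) (k : Fin n) (y : Fin n → P)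
    (x x' : Fin n → F) : Prop :=
  (∀ j, j ≠ k → x' j = x j) ∧
  x' k = (ι (y k) * ∏ j, x j ^ Q.nArrows j k + ∏ j, x j ^ Q.nArrows k j) /
    (ι (SemifieldAdd.sadd (y k) 1) * x k)

/-- The element `ŷ_j = y_j ∏_i x_i^{p_{ij} − p_{ji}}` of the ambient field. -/
noncomputable def yHat {P : Type} [CommGroup P] {n : ℕ} {F : Type} [Field F]
    (ι : P → F) (Q : Quiv (Fin n)) (x : Fin n → F) (y : Fin n → P) : Fin n → F := fun j =>
  ι (y j) * ∏ t, x t ^ ((Q.nArrows t j : ℤ) - (Q.nArrows j t : ℤ))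

/-- Tropical addition on the exponent lattice: the tropical semifield `Trop(y₁,…,y_n)` is the
free abelian group `Fin n →₀ ℤ` (written additively) with `⊕` the pointwise minimum. -/
noncomputable def tmin {n : ℕ} (f g : Fin n →₀ ℤ) : Fin n →₀ ℤ :=
  Finsupp.zipWith min (min_self 0) f g

/-- The tropical `Y`-mutation of the principal coefficients, written additively. -/
noncomputable def tropYMut {n : ℕ} (Q : Quiv (Fin n)) (k : Fin n)
    (y : Fin n → (Fin n →₀ ℤ)) : Fin n → (Fin n →₀ ℤ) := fun j =>
  if j = k then -y k
  else y j + (Q.nArrows k j : ℤ) • y k +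
    ((Q.nArrows j k : ℤ) - (Q.nArrows k j : ℤ)) • tmin (y k) 0

/-- The principal coefficients along a mutation sequence, computed in the tropical
semifield `Trop(y₁,…,y_n)` (so `y_{j,t}` is a Laurent monomial, recorded by its exponents). -/
noncomputable def tropYs {n : ℕ} (Qs : ℕ → Quiv (Fin n)) (ks : ℕ → Fin n) :
    ℕ → Fin n → (Fin n →₀ ℤ)
  | 0 => fun j => Finsupp.single j 1
  | (i + 1) => tropYMut (Qs i) (ks i) (tropYs Qs ks i)

/-- Formal subtraction-free rational expressions in variables `α`. -/
inductive SF (α : Type) : Type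
  | var : α → SF α
  | one : SF α
  | add : SF α → SF α → SF α
  | mul : SF α → SF α → SF α
  | inv : SF α → SF α

namespace SF

variable {α : Type}

/-- Formal power of a subtraction-free expression. -/
def pow (e : SF α) : ℕ → SF α
  | 0 => .one
  | (m + 1) => .mul e (pow e m)

/-- Formal integer power. -/
def zpow (e : SF α) : ℤ → SF α
  | Int.ofNat m => e.pow m
  | Int.negSucc m => .inv (e.pow (m + 1))

/-- Formal finite product. -/
def prodList : List (SF α) → SF α
  | [] => .one
  | e :: es => .mul e (prodList es)

/-- Evaluation of a subtraction-free expression in a field (with the field operations). -/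
def evalField {F : Type} [Field F] (f : α → F) : SF α → F
  | .var a => f a
  | .one => 1
  | .add p q => evalField f p + evalField f q
  | .mul p q => evalField f p * evalField f q
  | .inv p => (evalField f p)⁻¹

/-- Evaluation of a subtraction-free expression in a semifield `(ℙ, ⊕, ·)` (every `+` is
interpreted as the auxiliary addition `⊕`). -/
def evalSF {P : Type} [CommGroup P] [SemifieldAdd P] (f : α → P) : SF α → P
  | .var a => f a
  | .one => 1
  | .add p q => SemifieldAdd.sadd (evalSF f p) (evalSF f q)
  | .mul p q => evalSF f p * evalSF f q
  | .inv p => (evalSF f p)⁻¹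

/-- The formal Laurent monomial `∏_j y_j^{m_j}` in the coefficient variables. -/
noncomputable def yMonomial {n : ℕ} (m : Fin n →₀ ℤ) : SF (Fin n ⊕ Fin n) :=
  SF.prodList ((List.finRange n).map fun j => (SF.var (Sum.inr j)).zpow (m j))

end SF

/-- The canonical subtraction-free expressions, in the initial cluster variables `x₁,…,x_n`
(on the left) and coefficient variables `y₁,…,y_n` (on the right), of the
principal-coefficient cluster variables `X_{i,t}` along a mutation sequence: they are
produced by the exchange recursion, the coefficients being computed in the tropical
semifield `Trop(y₁,…,y_n)`. -/
noncomputable def sfXChain {n : ℕ} (Qs : ℕ → Quiv (Fin n)) (ks : ℕ → Fin n) :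
    ℕ → Fin n → SF (Fin n ⊕ Fin n)
  | 0 => fun i => .var (Sum.inl i)
  | (i + 1) => fun j =>
    if j = ks i then
      .mul
        (.add
          (.mul (SF.yMonomial (tropYs Qs ks i (ks i)))
            (SF.prodList ((List.finRange n).map fun t =>
              (sfXChain Qs ks i t).pow ((Qs i).nArrows t (ks i)))))
          (SF.prodList ((List.finRange n).map fun t =>
            (sfXChain Qs ks i t).pow ((Qs i).nArrows (ks i) t))))
        (.inv (.mul (SF.yMonomial (tmin (tropYs Qs ks i (ks i)) 0))
          (sfXChain Qs ks i (ks i))))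
    else sfXChain Qs ks i j

/-- The hypotheses of a cluster pattern (restricted along one infinite mutation sequence
`ks`, with steps imposed below `ℓ`): an assignment of seeds
`(x_i, y_i, (Q_i, H_i))` with ambient field `ℱ = ℚℙ(x₁,…,x_n)`, the initial cluster being
the free generating set, consecutive seeds being related by seed mutation. -/
structure IsClusterChain (P : Type) [CommGroup P] [SemifieldAdd P]
    [IsDomain (MonoidAlgebra ℤ P)] (n : ℕ) (ℓ : ℕ) (ks : ℕ → Fin n)
    (Qs : ℕ → Quiv (Fin n)) (Hs : ∀ i, HSet (Qs i))
    (xs : ℕ → Fin n → ClusterField P n) (ys : ℕ → Fin n → P) : Prop where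
  loopFree : (Qs 0).LoopFree
  homotopy : IsHomotopy (Qs 0) (Hs 0)
  reduced : IsReducedH (Qs 0) (Hs 0)
  finArrow : Finite (Qs 0).Arrow
  init_x : ∀ i, xs 0 i = xInit P n i
  quiver_step : ∀ i < ℓ, IsMutationStep (Qs i) (Hs i) (ks i) (Qs (i + 1)) (Hs (i + 1))
  x_step : ∀ i < ℓ, XMutEq (iotaP P n) (Qs i) (ks i) (ys i) (xs i) (xs (i + 1))
  y_step : ∀ i < ℓ, ys (i + 1) = yMut (Qs i) (ks i) (ys i)

end CMu

/-!
Following Fomin–Zelevinsky (Cluster algebras IV, Thm. 3.7), one proves by induction along the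
mutation sequence the stronger statement that, besides `x_{j,t} = X_{j,t}|_ℱ / F_{j,t}|_ℙ`, the
coefficients factor as `y_{j,t} = y^{c_{j,t}} ∏_l F_{l,t}|_ℙ ^ b_{lj,t}`, where `y^{c_{j,t}}` is the
principal (tropical) coefficient and `b_t` is the exchange matrix of `Q_t`. Given this, the exchange
relation for `x` becomes that of `X` divided by `F|_ℙ`, because `(A / B) ⊕ 1 = (A ⊕ B) / B` turns
`y_k ⊕ 1` into the semifield value of the numerator of `F_{k,t+1}`. The only input from the
mutation of quivers with homotopy is how arrow counts change: the deleted `2`-cycles come in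
opposite pairs, so the exchange matrix of `μ_k(Q,H)` is that of the pre-mutation,
`b_{lj} + p_{lk} p_{kj} - p_{jk} p_{kl}` away from `k`.
-/

namespace CMu

section ArrowCounts

variable {V : Type}

namespace Quiv

noncomputable def exchangeMatrix (Q : Quiv V) : Matrix V V ℤ :=
  Matrix.of fun i j => (Q.nArrows i j : ℤ) - Q.nArrows j i

lemma exchangeMatrix_apply (Q : Quiv V) (i j : V) :
    Q.exchangeMatrix i j = (Q.nArrows i j : ℤ) - Q.nArrows j i := rfl

structure IsCountMutation (Q : Quiv V) (k : V) (R : Quiv V) : Prop where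
  nArrows_self : Q.nArrows k k = 0
  nArrows_to : ∀ l, R.nArrows l k = Q.nArrows k l
  nArrows_from : ∀ l, R.nArrows k l = Q.nArrows l k
  exchangeMatrix_of_ne : ∀ l j, l ≠ k → j ≠ k →
    R.exchangeMatrix l j = Q.exchangeMatrix l j +
      Q.nArrows l k * Q.nArrows k j - Q.nArrows j k * Q.nArrows k l

namespace IsCountMutation

variable {Q R : Quiv V} {k : V}

lemma exchangeMatrix_to (h : Q.IsCountMutation k R) (l : V) :
    R.exchangeMatrix l k = -Q.exchangeMatrix l k := by
  simp only [exchangeMatrix_apply, h.nArrows_to, h.nArrows_from, neg_sub]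

lemma exchangeMatrix_from (h : Q.IsCountMutation k R) (j : V) :
    R.exchangeMatrix k j = -Q.exchangeMatrix k j := by
  simp only [exchangeMatrix_apply, h.nArrows_to, h.nArrows_from, neg_sub]

end IsCountMutation

end Quiv

lemma Quiv.LoopFree.nArrows_self {Q : Quiv V} (hQ : Q.LoopFree) (k : V) : Q.nArrows k k = 0 :=
  have : IsEmpty {a : Q.Arrow // Q.src a = k ∧ Q.tgt a = k} :=
    ⟨fun a => hQ a.1 (a.2.1.trans a.2.2.symm)⟩
  Nat.card_of_isEmpty

lemma Quiv.LoopFree.preMut {Q : Quiv V} (hQ : Q.LoopFree) (k : V) : (preMut Q k).LoopFree := by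
  rintro (⟨a, -⟩ | ⟨a, -⟩ | ⟨-, -, -, h⟩)
  exacts [hQ a, (hQ a ·.symm), h]

lemma Quiv.LoopFree.restrictQ {Q : Quiv V} (hQ : Q.LoopFree) (S : Set Q.Arrow) :
    (restrictQ Q S).LoopFree := fun a => hQ a.1

instance preMut_finite (Q : Quiv V) [Finite Q.Arrow] (k : V) : Finite (preMut Q k).Arrow := by
  dsimp only [preMut]
  infer_instance

instance restrictQ_finite (Q : Quiv V) [Finite Q.Arrow] (S : Set Q.Arrow) :
    Finite (restrictQ Q S).Arrow :=
  Subtype.finite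

namespace QIso

variable {Q R : Quiv V}

lemma nArrows_eq (f : QIso Q R) (i j : V) : R.nArrows i j = Q.nArrows i j :=
  Nat.card_congr <| f.arr.symm.subtypeEquiv fun a => by
    rw [← f.src_eq, ← f.tgt_eq, Equiv.apply_symm_apply]

lemma loopFree (f : QIso Q R) (hQ : Q.LoopFree) : R.LoopFree := fun a => by
  rw [← f.arr.apply_symm_apply a, f.src_eq, f.tgt_eq]
  exact hQ _

lemma finite (f : QIso Q R) [Finite Q.Arrow] : Finite R.Arrow := Finite.of_equiv _ f.arr

end QIso

section PreMutation

variable {Q : Quiv V} {k : V}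

lemma nArrows_preMut_to (hQ : Q.LoopFree) (l : V) :
    (preMut Q k).nArrows l k = Q.nArrows k l := by
  refine (Nat.card_congr (Equiv.ofBijective
    (fun a : {a : Q.Arrow // Q.src a = k ∧ Q.tgt a = l} =>
      (⟨.inr (.inl ⟨a.1, .inl a.2.1⟩), a.2.2, a.2.1⟩ :
        {x : (preMut Q k).Arrow // (preMut Q k).src x = l ∧ (preMut Q k).tgt x = k}))
    ⟨fun ⟨_, _⟩ ⟨_, _⟩ h => by cases h; rfl, ?_⟩)).symm
  rintro ⟨⟨a, -, ha⟩ | ⟨a, -⟩ | ⟨⟨α, -⟩, hα, -, -⟩, hs, ht⟩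
  · exact absurd ht ha
  · exact ⟨⟨a, ht, hs⟩, rfl⟩
  · exact absurd (hα.trans ht.symm) (hQ α)

lemma nArrows_preMut_from (hQ : Q.LoopFree) (l : V) :
    (preMut Q k).nArrows k l = Q.nArrows l k := by
  refine (Nat.card_congr (Equiv.ofBijective
    (fun a : {a : Q.Arrow // Q.src a = l ∧ Q.tgt a = k} =>
      (⟨.inr (.inl ⟨a.1, .inr a.2.2⟩), a.2.2, a.2.1⟩ :
        {x : (preMut Q k).Arrow // (preMut Q k).src x = k ∧ (preMut Q k).tgt x = l}))
    ⟨fun ⟨_, _⟩ ⟨_, _⟩ h => by cases h; rfl, ?_⟩)).symm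
  rintro ⟨⟨a, ha, -⟩ | ⟨a, -⟩ | ⟨⟨-, β⟩, -, hβ, -⟩, hs, ht⟩
  · exact absurd hs ha
  · exact ⟨⟨a, ht, hs⟩, rfl⟩
  · exact absurd (hs.trans hβ.symm) (hQ β)

lemma nArrows_preMut_of_ne [Finite Q.Arrow] {l j : V} (hl : l ≠ k) (hj : j ≠ k) (hlj : l ≠ j) :
    (preMut Q k).nArrows l j = Q.nArrows l j + Q.nArrows l k * Q.nArrows k j := by
  rw [Quiv.nArrows, Quiv.nArrows, Quiv.nArrows, Quiv.nArrows, ← Nat.card_prod, ← Nat.card_sum]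
  refine (Nat.card_congr (Equiv.ofBijective
    (fun z : {a : Q.Arrow // Q.src a = l ∧ Q.tgt a = j} ⊕
        ({a : Q.Arrow // Q.src a = l ∧ Q.tgt a = k} ×
         {a : Q.Arrow // Q.src a = k ∧ Q.tgt a = j}) =>
      (match z with
        | .inl a => ⟨.inl ⟨a.1, a.2.1.symm ▸ hl, a.2.2.symm ▸ hj⟩, a.2⟩
        | .inr (β, α) => ⟨.inr (.inr ⟨(α.1, β.1), α.2.1, β.2.2,
            fun e => hlj (β.2.1.symm.trans (e.trans α.2.2))⟩), β.2.1, α.2.2⟩ :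
        {x : (preMut Q k).Arrow // (preMut Q k).src x = l ∧ (preMut Q k).tgt x = j}))
    ⟨?_, ?_⟩)).symm
  · rintro (⟨_, _⟩ | ⟨⟨_, _⟩, ⟨_, _⟩⟩) (⟨_, _⟩ | ⟨⟨_, _⟩, ⟨_, _⟩⟩) h <;> cases h <;> rfl
  · rintro ⟨⟨a, -⟩ | ⟨a, ha⟩ | ⟨⟨α, β⟩, hα, hβ, -⟩, hs, ht⟩
    · exact ⟨.inl ⟨a, hs, ht⟩, rfl⟩
    · exact (ha.elim (fun h => hj (ht.symm.trans h)) (fun h => hl (hs.symm.trans h))).elim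
    · exact ⟨.inr (⟨β, hs, hβ⟩, ⟨α, hα, ht⟩), rfl⟩

end PreMutation

section Deletion

variable {R : Quiv V}

lemma nArrows_restrictQ_of_forall_not_mem {S : Set R.Arrow} {i j : V}
    (h : ∀ a, R.src a = i → R.tgt a = j → a ∉ S) :
    (restrictQ R S).nArrows i j = R.nArrows i j :=
  Nat.card_congr (Equiv.subtypeSubtypeEquivSubtype (p := (· ∉ S))
    (q := fun a => R.src a = i ∧ R.tgt a = j) fun ha => h _ ha.1 ha.2)

lemma nArrows_eq_restrictQ_add [Finite R.Arrow] (S : Set R.Arrow) (i j : V) :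
    R.nArrows i j = (restrictQ R S).nArrows i j +
      Nat.card {a // (R.src a = i ∧ R.tgt a = j) ∧ a ∈ S} := by
  classical
  let p a := R.src a = i ∧ R.tgt a = j
  have hkept : (restrictQ R S).nArrows i j = Nat.card {a // p a ∧ a ∉ S} :=
    Nat.card_congr ((Equiv.subtypeSubtypeEquivSubtypeInter (· ∉ S) p).trans
      (Equiv.subtypeEquivRight fun _ => and_comm))
  rw [hkept, ← Nat.card_congr (Equiv.subtypeSubtypeEquivSubtypeInter p (· ∉ S)),
    ← Nat.card_congr (Equiv.subtypeSubtypeEquivSubtypeInter p (· ∈ S)), add_comm,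
    ← Nat.card_sum, Nat.card_congr (Equiv.sumCompl fun x : Subtype p => x.1 ∈ S)]
  rfl

namespace TwoCycleDeletion

variable {H : HSet R} {k : V}

lemma fst_ne_snd (D : TwoCycleDeletion R H k) {q : R.Arrow × R.Arrow} (hq : q ∈ D.pairs) :
    q.1 ≠ q.2 := fun h =>
  D.src_ne_tgt q hq ((D.endpoints q hq).2.symm.trans (congrArg R.tgt h.symm))

lemma ne_of_mem_deleted (D : TwoCycleDeletion R H k) {a : R.Arrow} (ha : a ∈ D.deleted) :
    R.src a ≠ k ∧ R.tgt a ≠ k := by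
  obtain ⟨q, hq, rfl | rfl⟩ := ha
  · exact ⟨D.src_ne_k q hq, D.tgt_ne_k q hq⟩
  · rw [← (D.endpoints q hq).1, (D.endpoints q hq).2]
    exact ⟨D.tgt_ne_k q hq, D.src_ne_k q hq⟩

lemma eq_of_mem (D : TwoCycleDeletion R H k) {q q' : R.Arrow × R.Arrow} (hq : q ∈ D.pairs)
    (hq' : q' ∈ D.pairs) {a : R.Arrow} (ha : a = q.1 ∨ a = q.2) (ha' : a = q'.1 ∨ a = q'.2) :
    q = q' := by
  by_contra hne
  have := D.disjoint q hq q' hq' hne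
  rcases ha with rfl | rfl <;> rcases ha' with h | h <;> tauto

lemma nArrows_restrictQ_to (D : TwoCycleDeletion R H k) (l : V) :
    (restrictQ R D.deleted).nArrows l k = R.nArrows l k :=
  nArrows_restrictQ_of_forall_not_mem fun _ _ ht ha => (D.ne_of_mem_deleted ha).2 ht

lemma nArrows_restrictQ_from (D : TwoCycleDeletion R H k) (l : V) :
    (restrictQ R D.deleted).nArrows k l = R.nArrows k l :=
  nArrows_restrictQ_of_forall_not_mem fun _ hs _ ha => (D.ne_of_mem_deleted ha).1 hs

lemma card_deleted [Finite R.Arrow] (D : TwoCycleDeletion R H k) (l j : V) :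
    Nat.card {a // (R.src a = l ∧ R.tgt a = j) ∧ a ∈ D.deleted} =
      Nat.card {q // q ∈ D.pairs ∧ R.src q.1 = l ∧ R.tgt q.1 = j} +
        Nat.card {q // q ∈ D.pairs ∧ R.src q.1 = j ∧ R.tgt q.1 = l} := by
  rw [← Nat.card_sum]
  refine (Nat.card_congr (Equiv.ofBijective
    (fun z : {q // q ∈ D.pairs ∧ R.src q.1 = l ∧ R.tgt q.1 = j} ⊕
        {q // q ∈ D.pairs ∧ R.src q.1 = j ∧ R.tgt q.1 = l} =>
      (match z with
        | .inl q => ⟨q.1.1, q.2.2, q.1, q.2.1, .inl rfl⟩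
        | .inr q => ⟨q.1.2, ⟨(D.endpoints q.1 q.2.1).1.symm.trans q.2.2.2,
            (D.endpoints q.1 q.2.1).2.trans q.2.2.1⟩, q.1, q.2.1, .inr rfl⟩ :
        {a // (R.src a = l ∧ R.tgt a = j) ∧ a ∈ D.deleted}))
    ⟨?_, ?_⟩)).symm
  · rintro (⟨q, hq, _⟩ | ⟨q, hq, _⟩) (⟨q', hq', _⟩ | ⟨q', hq', _⟩) h <;>
      have h' := congrArg Subtype.val h <;> dsimp only at h'
    · exact congrArg Sum.inl (Subtype.ext (D.eq_of_mem hq hq' (.inl rfl) (.inl h')))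
    · cases D.eq_of_mem hq hq' (.inl rfl) (.inr h')
      exact absurd h' (D.fst_ne_snd hq)
    · cases D.eq_of_mem hq hq' (.inr rfl) (.inl h')
      exact absurd h'.symm (D.fst_ne_snd hq)
    · exact congrArg Sum.inr (Subtype.ext (D.eq_of_mem hq hq' (.inr rfl) (.inr h')))
  · rintro ⟨a, ⟨hs, ht⟩, q, hq, rfl | rfl⟩
    · exact ⟨.inl ⟨q, hq, hs, ht⟩, rfl⟩
    · exact ⟨.inr ⟨q, hq, (D.endpoints q hq).2.symm.trans ht,
        (D.endpoints q hq).1.trans hs⟩, rfl⟩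

lemma exchangeMatrix_restrictQ [Finite R.Arrow] (D : TwoCycleDeletion R H k) :
    (restrictQ R D.deleted).exchangeMatrix = R.exchangeMatrix := by
  ext l j
  have hlj := nArrows_eq_restrictQ_add D.deleted l j
  have hjl := nArrows_eq_restrictQ_add D.deleted j l
  rw [D.card_deleted] at hlj hjl
  simp only [Quiv.exchangeMatrix_apply, hlj, hjl]
  push_cast
  ring

end TwoCycleDeletion

end Deletion

section Mutation

variable {Q R : Quiv V} {k : V}

lemma QIso.exchangeMatrix_eq (f : QIso Q R) : R.exchangeMatrix = Q.exchangeMatrix := by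
  ext i j
  simp only [Quiv.exchangeMatrix_apply, f.nArrows_eq]

lemma exchangeMatrix_preMut_of_ne [Finite Q.Arrow] {l j : V} (hl : l ≠ k) (hj : j ≠ k) :
    (preMut Q k).exchangeMatrix l j = Q.exchangeMatrix l j +
      Q.nArrows l k * Q.nArrows k j - Q.nArrows j k * Q.nArrows k l := by
  rcases eq_or_ne l j with rfl | hlj
  · simp only [Quiv.exchangeMatrix_apply]
    ring
  · simp only [Quiv.exchangeMatrix_apply, nArrows_preMut_of_ne hl hj hlj,
      nArrows_preMut_of_ne hj hl hlj.symm]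
    push_cast
    ring

namespace IsMutationStep

variable {H : HSet Q} {K : HSet R}

lemma loopFree (h : IsMutationStep Q H k R K) (hQ : Q.LoopFree) : R.LoopFree := by
  obtain ⟨D, -, f, -⟩ := h
  exact f.loopFree ((hQ.preMut k).restrictQ D.deleted)

lemma finite [Finite Q.Arrow] (h : IsMutationStep Q H k R K) : Finite R.Arrow := by
  obtain ⟨D, -, f, -⟩ := h
  have : Finite (mutQuiv Q H k D).Arrow := restrictQ_finite (preMut Q k) D.deleted
  exact f.finite

lemma isCountMutation [Finite Q.Arrow] (h : IsMutationStep Q H k R K) (hQ : Q.LoopFree) :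
    Q.IsCountMutation k R := by
  obtain ⟨D, -, f, -⟩ := h
  refine ⟨hQ.nArrows_self k, fun l => ?_, fun l => ?_, fun l j hl hj => ?_⟩
  · rw [f.nArrows_eq, mutQuiv, D.nArrows_restrictQ_to, nArrows_preMut_to hQ]
  · rw [f.nArrows_eq, mutQuiv, D.nArrows_restrictQ_from, nArrows_preMut_from hQ]
  · rw [f.exchangeMatrix_eq, mutQuiv, D.exchangeMatrix_restrictQ,
      exchangeMatrix_preMut_of_ne hl hj]

end IsMutationStep

end Mutation

end ArrowCounts

section LaurentMonomial

variable {G : Type*} [CommGroup G] {n : ℕ}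

def laurentMonomial (x : Fin n → G) (e : Fin n → ℤ) : G := ∏ l, x l ^ e l

lemma laurentMonomial_add (x : Fin n → G) (e e' : Fin n → ℤ) :
    laurentMonomial x (e + e') = laurentMonomial x e * laurentMonomial x e' := by
  simp only [laurentMonomial, Pi.add_apply, zpow_add, Finset.prod_mul_distrib]

lemma laurentMonomial_neg (x : Fin n → G) (e : Fin n → ℤ) :
    laurentMonomial x (-e) = (laurentMonomial x e)⁻¹ := by
  simp only [laurentMonomial, Pi.neg_apply, zpow_neg, Finset.prod_inv_distrib]

lemma laurentMonomial_sub (x : Fin n → G) (e e' : Fin n → ℤ) :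
    laurentMonomial x (e - e') = laurentMonomial x e / laurentMonomial x e' := by
  rw [sub_eq_add_neg, laurentMonomial_add, laurentMonomial_neg, div_eq_mul_inv]

lemma laurentMonomial_zsmul (x : Fin n → G) (c : ℤ) (e : Fin n → ℤ) :
    laurentMonomial x (c • e) = laurentMonomial x e ^ c := by
  simp only [laurentMonomial, Pi.smul_apply, smul_eq_mul, mul_comm c, zpow_mul,
    Finset.prod_zpow]

lemma laurentMonomial_single (x : Fin n → G) (j : Fin n) :
    laurentMonomial x (Pi.single j 1) = x j := by
  rw [laurentMonomial, Finset.prod_eq_single j (fun l _ hl => by simp [hl]) (by simp)]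
  simp

lemma laurentMonomial_one (e : Fin n → ℤ) : laurentMonomial (fun _ => (1 : G)) e = 1 := by
  simp [laurentMonomial]

lemma laurentMonomial_natCast (x : Fin n → G) (p : Fin n → ℕ) :
    laurentMonomial x (fun l => (p l : ℤ)) = ∏ l, x l ^ p l := by
  simp only [laurentMonomial, zpow_natCast]

lemma map_laurentMonomial {M : Type*} [DivisionCommMonoid M] (f : G →* M) (x : Fin n → G)
    (e : Fin n → ℤ) : f (laurentMonomial x e) = ∏ l, f (x l) ^ e l := by
  simp only [laurentMonomial, map_prod, map_zpow]

lemma laurentMonomial_eq_of_forall_ne {x x' : Fin n → G} {e e' : Fin n → ℤ} {k : Fin n}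
    (hx : ∀ l, l ≠ k → x' l = x l) (he : ∀ l, l ≠ k → e' l = e l) :
    laurentMonomial x' e' = x' k ^ e' k * (x k ^ e k)⁻¹ * laurentMonomial x e := by
  rw [laurentMonomial, laurentMonomial, ← Finset.mul_prod_erase _ _ (Finset.mem_univ k),
    ← Finset.mul_prod_erase _ _ (Finset.mem_univ k),
    Finset.prod_congr rfl fun l hl => by rw [hx l (Finset.ne_of_mem_erase hl),
      he l (Finset.ne_of_mem_erase hl)]]
  group

lemma laurentMonomial_congr_of_eq_zero {x x' : Fin n → G} {e : Fin n → ℤ} {k : Fin n}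
    (hx : ∀ l, l ≠ k → x' l = x l) (he : e k = 0) :
    laurentMonomial x' e = laurentMonomial x e := by
  rw [laurentMonomial_eq_of_forall_ne hx fun _ _ => rfl, he, zpow_zero, zpow_zero, inv_one,
    mul_one, one_mul]

end LaurentMonomial

lemma laurentMonomial_exchangeMatrix {G : Type*} [CommGroup G] {n : ℕ} (x : Fin n → G)
    (Q : Quiv (Fin n)) (k : Fin n) :
    laurentMonomial x (fun l => Q.exchangeMatrix l k) =
      (∏ l, x l ^ Q.nArrows l k) * (∏ l, x l ^ Q.nArrows k l)⁻¹ := by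
  rw [← laurentMonomial_natCast, ← laurentMonomial_natCast, ← div_eq_mul_inv,
    ← laurentMonomial_sub]
  rfl

section Coefficients

variable {P : Type} [CommGroup P] {n : ℕ}

noncomputable def yMutWith (Q : Quiv (Fin n)) (k : Fin n) (s : P) (y : Fin n → P) :
    Fin n → P := fun j =>
  if j = k then (y k)⁻¹
  else y j * y k ^ Q.nArrows k j * s ^ ((Q.nArrows j k : ℤ) - (Q.nArrows k j : ℤ))

lemma laurentMonomial_tropYMut (y₀ : Fin n → P) (Q : Quiv (Fin n)) (k : Fin n)
    (c : Fin n → Fin n →₀ ℤ) (j : Fin n) :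
    laurentMonomial y₀ (tropYMut Q k c j) =
      yMutWith Q k (laurentMonomial y₀ (tmin (c k) 0)) (fun l => laurentMonomial y₀ (c l)) j := by
  unfold tropYMut yMutWith
  split_ifs
  · rw [Finsupp.coe_neg, laurentMonomial_neg]
  · rw [Finsupp.coe_add, Finsupp.coe_add, Finsupp.coe_smul, Finsupp.coe_smul,
      laurentMonomial_add, laurentMonomial_add, laurentMonomial_zsmul, laurentMonomial_zsmul,
      zpow_natCast]

lemma laurentMonomial_tropYs_zero (y₀ : Fin n → P) (Qs : ℕ → Quiv (Fin n)) (ks : ℕ → Fin n)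
    (j : Fin n) : laurentMonomial y₀ (tropYs Qs ks 0 j) = y₀ j := by
  rw [tropYs, Finsupp.single_eq_pi_single, laurentMonomial_single]

end Coefficients

section CoefficientMutation

variable {P : Type} [CommGroup P] [SemifieldAdd P] {n : ℕ} {Q R : Quiv (Fin n)} {k : Fin n}
  {Y F F' y : Fin n → P} {Ym : P}

lemma sadd_mul_inv_one (a b : P) :
    SemifieldAdd.sadd (a * b⁻¹) 1 = SemifieldAdd.sadd a b * b⁻¹ := by
  rw [mul_comm (SemifieldAdd.sadd a b), SemifieldAdd.mul_sadd, inv_mul_cancel, mul_comm b⁻¹]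

lemma yMut_self_eq (hQR : Q.IsCountMutation k R)
    (hy : ∀ j, y j = Y j * laurentMonomial F (fun l => Q.exchangeMatrix l j))
    (hF : ∀ l, l ≠ k → F' l = F l) :
    yMut Q k y k = yMutWith Q k Ym Y k * laurentMonomial F' (fun l => R.exchangeMatrix l k) := by
  have hkk : R.exchangeMatrix k k = 0 := sub_self _
  rw [laurentMonomial_congr_of_eq_zero (e := fun l => R.exchangeMatrix l k) hF hkk]
  simp only [yMut, yMutWith, ↓reduceIte, hy k, hQR.exchangeMatrix_to, mul_inv]
  rw [← laurentMonomial_neg]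
  rfl

lemma yMut_of_ne_eq (hQR : Q.IsCountMutation k R)
    (hy : ∀ j, y j = Y j * laurentMonomial F (fun l => Q.exchangeMatrix l j))
    (hF : ∀ l, l ≠ k → F' l = F l)
    (hFk : F' k = SemifieldAdd.sadd (Y k * ∏ l, F l ^ Q.nArrows l k) (∏ l, F l ^ Q.nArrows k l) *
      (Ym * F k)⁻¹)
    {j : Fin n} (hj : j ≠ k) :
    yMut Q k y j = yMutWith Q k Ym Y j * laurentMonomial F' (fun l => R.exchangeMatrix l j) := by
  set p : Fin n → ℤ := fun l => Q.nArrows l k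
  set q : Fin n → ℤ := fun l => Q.nArrows k l
  have hcol : ∀ l, l ≠ k →
      R.exchangeMatrix l j = ((fun l => Q.exchangeMatrix l j) + q j • p - p j • q) l :=
    fun l hl => by
      rw [hQR.exchangeMatrix_of_ne l j hl hj]
      simp only [Pi.add_apply, Pi.sub_apply, Pi.smul_apply, smul_eq_mul, p, q]
      ring
  have hcol_k :
      ((fun l => Q.exchangeMatrix l j) + q j • p - p j • q) k = -R.exchangeMatrix k j := by
    simp only [Pi.add_apply, Pi.sub_apply, Pi.smul_apply, smul_eq_mul, p, q, hQR.nArrows_self,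
      hQR.exchangeMatrix_from]
    ring
  simp only [yMut, yMutWith, if_neg hj]
  rw [laurentMonomial_eq_of_forall_ne hF hcol, hcol_k, laurentMonomial_sub, laurentMonomial_add,
    laurentMonomial_zsmul, laurentMonomial_zsmul, laurentMonomial_natCast, laurentMonomial_natCast,
    hQR.exchangeMatrix_from, Quiv.exchangeMatrix_apply, hy j, hy k,
    laurentMonomial_exchangeMatrix F Q k, ← mul_assoc (Y k), sadd_mul_inv_one, hFk]
  -- a commutative-group identity, checked in the `ℤ`-module `Additive P`
  apply Additive.ofMul.injective
  simp only [ofMul_mul, ofMul_zpow, ofMul_inv, ofMul_pow, ofMul_div]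
  module

end CoefficientMutation

section Exchange

variable {P : Type} [CommGroup P] [SemifieldAdd P] {n : ℕ}

lemma exchange_div_eq {K : Type*} [Field K] (ι : P →* K) {p q : Fin n → ℕ} {k : Fin n}
    {F : Fin n → P} {N x : Fin n → K} {Y Ym y : P} (hx : ∀ l, x l = N l / ι (F l))
    (hy : y = Y * (∏ l, F l ^ p l) * (∏ l, F l ^ q l)⁻¹) :
    (ι y * ∏ l, x l ^ p l + ∏ l, x l ^ q l) / (ι (SemifieldAdd.sadd y 1) * x k) =
      ((ι Y * ∏ l, N l ^ p l + ∏ l, N l ^ q l) * (ι Ym * N k)⁻¹) /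
        ι (SemifieldAdd.sadd (Y * ∏ l, F l ^ p l) (∏ l, F l ^ q l) * (Ym * F k)⁻¹) := by
  have hι : ∀ z, ι z ≠ 0 := fun z => ((Group.isUnit z).map ι).ne_zero
  have hprod : ∀ m : Fin n → ℕ, ∏ l, x l ^ m l = (∏ l, N l ^ m l) / ι (∏ l, F l ^ m l) := by
    intro m
    simp only [hx, div_pow, Finset.prod_div_distrib, map_prod, map_pow]
  rw [hy, sadd_mul_inv_one, hx k, hprod, hprod]
  have := hι (∏ l, F l ^ p l)
  have := hι (∏ l, F l ^ q l)
  have := hι (SemifieldAdd.sadd (Y * ∏ l, F l ^ p l) (∏ l, F l ^ q l))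
  have := hι Ym
  have := hι (F k)
  simp only [map_mul, map_inv]
  -- both sides are junk `0` when `N k = 0`
  by_cases hNk : N k = 0
  · simp [hNk]
  · field_simp

end Exchange

namespace SF

variable {α : Type}

section Field

variable {F : Type} [Field F] (f : α → F)

lemma evalField_pow (e : SF α) (m : ℕ) : (e.pow m).evalField f = e.evalField f ^ m := by
  induction m with
  | zero => simp [SF.pow, evalField]
  | succ m ih => rw [SF.pow, evalField, ih, pow_succ']

lemma evalField_zpow (e : SF α) (z : ℤ) : (e.zpow z).evalField f = e.evalField f ^ z := by
  cases z with
  | ofNat m => rw [SF.zpow, evalField_pow, Int.ofNat_eq_natCast, zpow_natCast]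
  | negSucc m => rw [SF.zpow, evalField, evalField_pow, zpow_negSucc]

lemma evalField_prodList (l : List (SF α)) :
    (prodList l).evalField f = (l.map (evalField f)).prod := by
  induction l with
  | nil => rfl
  | cons e es ih => rw [prodList, evalField, ih, List.map_cons, List.prod_cons]

lemma evalField_prodList_pow {n : ℕ} (e : Fin n → SF α) (m : Fin n → ℕ) :
    (prodList ((List.finRange n).map fun t => (e t).pow (m t))).evalField f =
      ∏ t, (e t).evalField f ^ m t := by
  simp only [evalField_prodList, List.map_map, Fin.prod_univ_def, Function.comp_def,
    evalField_pow]

lemma evalField_yMonomial {n : ℕ} (f : Fin n ⊕ Fin n → F) (m : Fin n →₀ ℤ) :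
    (yMonomial m).evalField f = ∏ j, f (Sum.inr j) ^ m j := by
  simp only [yMonomial, evalField_prodList, List.map_map, Fin.prod_univ_def, Function.comp_def,
    evalField_zpow, evalField]

end Field

section Semifield

variable {P : Type} [CommGroup P] [SemifieldAdd P] (f : α → P)

lemma evalSF_pow (e : SF α) (m : ℕ) : (e.pow m).evalSF f = e.evalSF f ^ m := by
  induction m with
  | zero => exact (pow_zero _).symm
  | succ m ih => rw [SF.pow, evalSF, ih, pow_succ']

lemma evalSF_zpow (e : SF α) (z : ℤ) : (e.zpow z).evalSF f = e.evalSF f ^ z := by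
  cases z with
  | ofNat m => rw [SF.zpow, evalSF_pow, Int.ofNat_eq_natCast, zpow_natCast]
  | negSucc m => rw [SF.zpow, evalSF, evalSF_pow, zpow_negSucc]

lemma evalSF_prodList (l : List (SF α)) :
    (prodList l).evalSF f = (l.map (evalSF f)).prod := by
  induction l with
  | nil => rfl
  | cons e es ih => rw [prodList, evalSF, ih, List.map_cons, List.prod_cons]

lemma evalSF_prodList_pow {n : ℕ} (e : Fin n → SF α) (m : Fin n → ℕ) :
    (prodList ((List.finRange n).map fun t => (e t).pow (m t))).evalSF f =
      ∏ t, (e t).evalSF f ^ m t := by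
  simp only [evalSF_prodList, List.map_map, Fin.prod_univ_def, Function.comp_def, evalSF_pow]

lemma evalSF_yMonomial {n : ℕ} (f : Fin n ⊕ Fin n → P) (m : Fin n →₀ ℤ) :
    (yMonomial m).evalSF f = laurentMonomial (fun j => f (Sum.inr j)) m := by
  simp only [yMonomial, evalSF_prodList, List.map_map, Fin.prod_univ_def, Function.comp_def,
    evalSF_zpow, evalSF, laurentMonomial]

end Semifield

end SF

section Embedding

variable (P : Type) [CommGroup P] [IsDomain (MonoidAlgebra ℤ P)] (n : ℕ)

noncomputable def iotaHom : P →* ClusterField P n :=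
  ((algebraMap (MvPolynomial (Fin n) (FractionRing (MonoidAlgebra ℤ P))) _).comp
      (MvPolynomial.C.comp (algebraMap (MonoidAlgebra ℤ P) _))).toMonoidHom.comp
    (MonoidAlgebra.of ℤ P)

lemma iotaHom_apply (y : P) : iotaHom P n y = iotaP P n y := rfl

end Embedding

section PrincipalCoefficients

variable {n : ℕ} (Qs : ℕ → Quiv (Fin n)) (ks : ℕ → Fin n)

noncomputable def xPrincipal {P : Type} [CommGroup P] [IsDomain (MonoidAlgebra ℤ P)]
    (y₀ : Fin n → P) (i : ℕ) (j : Fin n) : ClusterField P n :=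
  (sfXChain Qs ks i j).evalField (Sum.elim (xInit P n) (fun j' => iotaP P n (y₀ j')))

noncomputable def fPoly {P : Type} [CommGroup P] [SemifieldAdd P] (y₀ : Fin n → P) (i : ℕ)
    (j : Fin n) : P :=
  (sfXChain Qs ks i j).evalSF (Sum.elim (fun _ => 1) y₀)

variable {Qs ks}

lemma xPrincipal_succ_of_ne {P : Type} [CommGroup P] [IsDomain (MonoidAlgebra ℤ P)]
    (y₀ : Fin n → P) {i : ℕ} {j : Fin n} (h : j ≠ ks i) :
    xPrincipal Qs ks y₀ (i + 1) j = xPrincipal Qs ks y₀ i j := by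
  simp only [xPrincipal, sfXChain, if_neg h]

lemma fPoly_succ_of_ne {P : Type} [CommGroup P] [SemifieldAdd P] (y₀ : Fin n → P) {i : ℕ}
    {j : Fin n} (h : j ≠ ks i) : fPoly Qs ks y₀ (i + 1) j = fPoly Qs ks y₀ i j := by
  simp only [fPoly, sfXChain, if_neg h]

lemma xPrincipal_succ_self {P : Type} [CommGroup P] [IsDomain (MonoidAlgebra ℤ P)]
    (y₀ : Fin n → P) (i : ℕ) :
    xPrincipal Qs ks y₀ (i + 1) (ks i) =
      (iotaP P n (laurentMonomial y₀ (tropYs Qs ks i (ks i))) *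
            ∏ t, xPrincipal Qs ks y₀ i t ^ (Qs i).nArrows t (ks i) +
          ∏ t, xPrincipal Qs ks y₀ i t ^ (Qs i).nArrows (ks i) t) *
        (iotaP P n (laurentMonomial y₀ (tmin (tropYs Qs ks i (ks i)) 0)) *
          xPrincipal Qs ks y₀ i (ks i))⁻¹ := by
  simp only [xPrincipal, sfXChain, ↓reduceIte, SF.evalField, SF.evalField_yMonomial,
    SF.evalField_prodList_pow, Sum.elim_inr, ← iotaHom_apply, map_laurentMonomial]

lemma fPoly_succ_self {P : Type} [CommGroup P] [SemifieldAdd P] (y₀ : Fin n → P) (i : ℕ) :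
    fPoly Qs ks y₀ (i + 1) (ks i) =
      SemifieldAdd.sadd
          (laurentMonomial y₀ (tropYs Qs ks i (ks i)) *
            ∏ t, fPoly Qs ks y₀ i t ^ (Qs i).nArrows t (ks i))
          (∏ t, fPoly Qs ks y₀ i t ^ (Qs i).nArrows (ks i) t) *
        (laurentMonomial y₀ (tmin (tropYs Qs ks i (ks i)) 0) * fPoly Qs ks y₀ i (ks i))⁻¹ := by
  simp only [fPoly, sfXChain, ↓reduceIte, SF.evalSF, SF.evalSF_yMonomial,
    SF.evalSF_prodList_pow, Sum.elim_inr]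

end PrincipalCoefficients

section Separation

variable {P : Type} [CommGroup P] [SemifieldAdd P] [IsDomain (MonoidAlgebra ℤ P)] {n : ℕ}

structure SeparatedAt (Qs : ℕ → Quiv (Fin n)) (ks : ℕ → Fin n)
    (xs : ℕ → Fin n → ClusterField P n) (ys : ℕ → Fin n → P) (i : ℕ) : Prop where
  loopFree : (Qs i).LoopFree
  finite : Finite (Qs i).Arrow
  x_eq : ∀ j, xs i j = xPrincipal Qs ks (ys 0) i j / iotaP P n (fPoly Qs ks (ys 0) i j)
  y_eq : ∀ j, ys i j = laurentMonomial (ys 0) (tropYs Qs ks i j) *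
    laurentMonomial (fPoly Qs ks (ys 0) i) (fun l => (Qs i).exchangeMatrix l j)

variable {ℓ : ℕ} {ks : ℕ → Fin n} {Qs : ℕ → Quiv (Fin n)} {Hs : ∀ i, HSet (Qs i)}
  {xs : ℕ → Fin n → ClusterField P n} {ys : ℕ → Fin n → P}

lemma IsClusterChain.separatedAt_zero (h : IsClusterChain P n ℓ ks Qs Hs xs ys) :
    SeparatedAt Qs ks xs ys 0 where
  loopFree := h.loopFree
  finite := h.finArrow
  x_eq j := by
    rw [h.init_x, ← iotaHom_apply, show fPoly Qs ks (ys 0) 0 j = 1 from rfl, map_one, div_one]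
    rfl
  y_eq j := by
    rw [laurentMonomial_tropYs_zero, show fPoly Qs ks (ys 0) 0 = fun _ => 1 from rfl,
      laurentMonomial_one, mul_one]

lemma IsClusterChain.separatedAt_succ (h : IsClusterChain P n ℓ ks Qs Hs xs ys) {i : ℕ}
    (hi : i < ℓ) (hsep : SeparatedAt Qs ks xs ys i) : SeparatedAt Qs ks xs ys (i + 1) := by
  have := hsep.finite
  have hQR := (h.quiver_step i hi).isCountMutation hsep.loopFree
  have hF : ∀ l, l ≠ ks i → fPoly Qs ks (ys 0) (i + 1) l = fPoly Qs ks (ys 0) i l :=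
    fun l => fPoly_succ_of_ne (ys 0)
  refine ⟨(h.quiver_step i hi).loopFree hsep.loopFree, (h.quiver_step i hi).finite,
    fun j => ?_, fun j => ?_⟩
  · rcases eq_or_ne j (ks i) with rfl | hj
    · rw [(h.x_step i hi).2, xPrincipal_succ_self, fPoly_succ_self]
      exact exchange_div_eq (iotaHom P n) hsep.x_eq
        (by rw [hsep.y_eq, laurentMonomial_exchangeMatrix, mul_assoc])
    · rw [(h.x_step i hi).1 j hj, hsep.x_eq j, xPrincipal_succ_of_ne (ys 0) hj,
        fPoly_succ_of_ne (ys 0) hj]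
  · rw [h.y_step i hi, tropYs, laurentMonomial_tropYMut]
    rcases eq_or_ne j (ks i) with rfl | hj
    · exact yMut_self_eq hQR hsep.y_eq hF
    · exact yMut_of_ne_eq hQR hsep.y_eq hF (fPoly_succ_self (ys 0) i) hj

lemma IsClusterChain.separatedAt (h : IsClusterChain P n ℓ ks Qs Hs xs ys) {i : ℕ}
    (hi : i ≤ ℓ) : SeparatedAt Qs ks xs ys i := by
  induction i with
  | zero => exact h.separatedAt_zero
  | succ i ih => exact h.separatedAt_succ hi (ih (Nat.le_of_succ_le hi))

end Separation

/-- **The separation formula** (the analogue of [FZIV, Thm. 3.7]; Proposition `separation`).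
Let `(x_t, y_t, (Q_t, H_t))` be a cluster pattern of a 2-cycle-allowed cluster algebra with
coefficients in an arbitrary semifield `ℙ`, with initial cluster `(x₁,…,x_n)` and initial
coefficients `(y₁,…,y_n)`.  Let `X_{i,t}` be the cluster variables of the pattern with the
same initial quiver-with-homotopy chain and principal coefficients at the initial vertex
(given by the canonical subtraction-free expressions `sfXChain`, whose coefficients are
computed in the tropical semifield), and let `F_{i,t}` be obtained from `X_{i,t}` by
specializing the initial cluster variables to `1`.  Then
`x_{i,t} = X_{i,t}|_ℱ(x₁,…,x_n; y₁,…,y_n) / F_{i,t}|_ℙ(y₁,…,y_n)`,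
where the numerator is evaluated with the field operations of `ℱ` and the denominator is
evaluated in the semifield `ℙ` (and embedded into `ℱ`). -/
theorem separation_formula (P : Type) [CommGroup P] [SemifieldAdd P]
    [IsDomain (MonoidAlgebra ℤ P)] (n ℓ : ℕ) (ks : ℕ → Fin n)
    (Qs : ℕ → Quiv (Fin n)) (Hs : ∀ i, HSet (Qs i))
    (xs : ℕ → Fin n → ClusterField P n) (ys : ℕ → Fin n → P)
    (hchain : IsClusterChain P n ℓ ks Qs Hs xs ys) :
    ∀ i ≤ ℓ, ∀ j : Fin n,
      xs i j =
        SF.evalField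
          (Sum.elim (fun j' => xInit P n j') (fun j' => iotaP P n (ys 0 j')))
          (sfXChain Qs ks i j) /
        iotaP P n
          (SF.evalSF (Sum.elim (fun _ => (1 : P)) (fun j' => ys 0 j'))
            (sfXChain Qs ks i j)) :=
  fun _ hi => (hchain.separatedAt hi).x_eq
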